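/- Let R be an associative unital ring, ι an index type, and X_i (i ∈ ι) a family of left R-modules. Let (P_n, f_n)_{n∈ℤ} be an exact complex of projective R-modules that is Hom_R(−,X_i)-exact for every i ∈ ι. Let (A_n)_{n∈ℤ} be a subcomplex such that the restricted complex is exact and is Hom_R(−,X_i)-exact for every i ∈ ι, and such that P_n/A_n is projective for every n. Then the quotient complex (P_n/A_n) with the induced maps is an exact complex of projective R-modules that is Hom_R(−,X_i)-exact for every i ∈ ι, and the kernel of its map in degree 0 is isomorphic as an R-module to ker(f_0)/(A_0 ∩ ker(f_0)); consequently ker(f_0)/(A_0 ∩ ker(f_0)) is Gorenstein projective relative to the family (X_i), i.e. it is the degree-0 kernel of an exact, Hom_R(−,X_i)-exact (for all i) complex of projective modules. -/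

import Mathlib

/-! Write `M/A` for the quotient complex. Its kernel in degree `m` is the image of `ker f_m`:
if `f_m x ∈ A_{m+1}`, then `f_m x` is a cycle of `A`, hence `f_m x = f_m a` with `a ∈ A_m`, and
`x - a ∈ ker f_m`. Exactness of `M/A` and the description of its degree-0 kernel follow.

For `Hom(-, X)`-exactness, let `σ` on `M_{n+1}/A_{n+1}` kill the image of the quotient
differential. Its lift to `M_{n+1}` extends along `f_{n+1}` to some `τ` on `M_{n+2}`; on `A_{n+2}`,
`τ` extends along the restricted differential to some `ρ` on `A_{n+3}`. As `M_{n+3}/A_{n+3}` is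
projective, `A_{n+3}` is a retract of `M_{n+3}` via some `r`, and `τ - ρ ∘ r ∘ f_{n+2}` still
extends the lift of `σ`, but now vanishes on `A_{n+2}`, so it descends to the quotient. -/

universe u v w x

variable {R : Type u} [Ring R]

/-- A complex `(N n, g n)_{n ∈ ℤ}` is `Hom_R(-,X)`-exact if for every `n` and every
linear `σ : N (n+1) →ₗ X` with `σ ∘ g n = 0` there is `τ : N (n+2) →ₗ X` with
`σ = τ ∘ g (n+1)`. -/
def IsHomExact {N : ℤ → Type v} [∀ n, AddCommGroup (N n)] [∀ n, Module R (N n)]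
    (g : ∀ n, N n →ₗ[R] N (n + 1)) (X : Type x) [AddCommGroup X] [Module R X] : Prop :=
  ∀ n : ℤ, ∀ σ : N (n + 1) →ₗ[R] X, σ.comp (g n) = 0 →
    ∃ τ : N (n + 1 + 1) →ₗ[R] X, σ = τ.comp (g (n + 1))

/-- `G` is Gorenstein projective relative to the family `(X i)` if it is (isomorphic to)
the degree-0 kernel of an exact complex of projective modules which is
`Hom_R(-,X i)`-exact for every `i`. -/
def IsRelGorensteinProjective (R : Type u) [Ring R] {ι : Type w} (X : ι → Type x)
    [∀ i, AddCommGroup (X i)] [∀ i, Module R (X i)]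
    (G : Type v) [AddCommGroup G] [Module R G] : Prop :=
  ∃ (Q : ℤ → ModuleCat.{v} R) (d : ∀ n, Q n →ₗ[R] Q (n + 1)),
    (∀ n, Module.Projective R (Q n)) ∧
    (∀ n, LinearMap.range (d n) = LinearMap.ker (d (n + 1))) ∧
    (∀ i, IsHomExact d (X i)) ∧
    Nonempty (G ≃ₗ[R] LinearMap.ker (d 0))

variable {M : ℤ → Type v} [∀ n, AddCommGroup (M n)] [∀ n, Module R (M n)]

/-- The `n`-th map of the restricted complex of a subcomplex `(A n)`. -/
def restrictedMap (f : ∀ n, M n →ₗ[R] M (n + 1)) (A : ∀ n, Submodule R (M n))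
    (hA : ∀ n, A n ≤ (A (n + 1)).comap (f n)) (n : ℤ) : A n →ₗ[R] A (n + 1) :=
  (f n).restrict (fun x hx => hA n hx)

/-- The `n`-th map of the quotient complex `(M n ⧸ A n)`. -/
def quotientMap (f : ∀ n, M n →ₗ[R] M (n + 1)) (A : ∀ n, Submodule R (M n))
    (hA : ∀ n, A n ≤ (A (n + 1)).comap (f n)) (n : ℤ) :
    (M n ⧸ A n) →ₗ[R] (M (n + 1) ⧸ A (n + 1)) :=
  Submodule.mapQ (A n) (A (n + 1)) (f n) (hA n)

theorem Submodule.exists_retraction_of_projective_quotient {N : Type*} [AddCommGroup N]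
    [Module R N] (A : Submodule R N) [Module.Projective R (N ⧸ A)] :
    ∃ r : N →ₗ[R] A, r ∘ₗ A.subtype = LinearMap.id :=
  ((LinearMap.exact_subtype_mkQ A).split_tfae A.injective_subtype A.mkQ_surjective).out 0 1
    |>.mp (Module.projective_lifting_property _ _ A.mkQ_surjective)

noncomputable def Submodule.quotientInfEquivMapMkQ {N : Type*} [AddCommGroup N] [Module R N]
    (p q : Submodule R N) : (p ⧸ (q ⊓ p).comap p.subtype) ≃ₗ[R] p.map q.mkQ :=
  have hker : (q ⊓ p).comap p.subtype = LinearMap.ker (q.mkQ ∘ₗ p.subtype) := by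
    rw [LinearMap.ker_comp, ker_mkQ, comap_inf, comap_subtype_self, inf_top_eq]
  have hrange : LinearMap.range (q.mkQ ∘ₗ p.subtype) = p.map q.mkQ := by
    rw [LinearMap.range_comp, range_subtype]
  (quotEquivOfEq _ _ hker).trans
    ((q.mkQ ∘ₗ p.subtype).quotKerEquivRange.trans (LinearEquiv.ofEq _ _ hrange))

section QuotientComplex

variable {f : ∀ n, M n →ₗ[R] M (n + 1)} {A : ∀ n, Submodule R (M n)}
  {hA : ∀ n, A n ≤ (A (n + 1)).comap (f n)}

theorem subtype_comp_restrictedMap (n : ℤ) :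
    (A (n + 1)).subtype ∘ₗ restrictedMap f A hA n = f n ∘ₗ (A n).subtype :=
  rfl

theorem quotientMap_comp_mkQ (n : ℤ) :
    quotientMap f A hA n ∘ₗ (A n).mkQ = (A (n + 1)).mkQ ∘ₗ f n :=
  rfl

theorem ker_quotientMap {m : ℤ} (hff : f (m + 1) ∘ₗ f m = 0)
    (hexA : LinearMap.ker (restrictedMap f A hA (m + 1)) ≤
      LinearMap.range (restrictedMap f A hA m)) :
    LinearMap.ker (quotientMap f A hA m) = (LinearMap.ker (f m)).map (A m).mkQ := by
  refine le_antisymm (fun q hq => ?_) ?_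
  · obtain ⟨x, rfl⟩ := (A m).mkQ_surjective q
    have hx : f m x ∈ A (m + 1) := (Submodule.Quotient.mk_eq_zero _).mp hq
    obtain ⟨a, ha⟩ := hexA (x := ⟨f m x, hx⟩) (Subtype.ext (LinearMap.congr_fun hff x))
    have hfa : f m a = f m x := congrArg Subtype.val ha
    refine ⟨x - a, ?_, ?_⟩
    · change f m (x - a) = 0
      rw [map_sub, hfa, sub_self]
    · simp [(Submodule.Quotient.mk_eq_zero _).mpr a.2]
  · rintro _ ⟨x, hx, rfl⟩
    change (A (m + 1)).mkQ (f m x) = 0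
    rw [LinearMap.mem_ker.mp hx, map_zero]

theorem range_quotientMap_eq_ker {n : ℤ}
    (hex : LinearMap.range (f n) = LinearMap.ker (f (n + 1)))
    (hff : f (n + 1 + 1) ∘ₗ f (n + 1) = 0)
    (hexA : LinearMap.ker (restrictedMap f A hA (n + 1 + 1)) ≤
      LinearMap.range (restrictedMap f A hA (n + 1))) :
    LinearMap.range (quotientMap f A hA n) = LinearMap.ker (quotientMap f A hA (n + 1)) := by
  rw [ker_quotientMap hff hexA, ← hex, ← LinearMap.range_comp, ← quotientMap_comp_mkQ,
    LinearMap.range_comp_of_range_eq_top _ (Submodule.range_mkQ _)]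

theorem exists_le_ker_and_comp_eq {X : Type*} [AddCommGroup X] [Module R X]
    (hAX : IsHomExact (restrictedMap f A hA) X) {m : ℤ} (hff : f (m + 1) ∘ₗ f m = 0)
    [Module.Projective R (M (m + 1 + 1) ⧸ A (m + 1 + 1))]
    (τ : M (m + 1) →ₗ[R] X) (hτ : (τ ∘ₗ (A (m + 1)).subtype) ∘ₗ restrictedMap f A hA m = 0) :
    ∃ τ' : M (m + 1) →ₗ[R] X, A (m + 1) ≤ LinearMap.ker τ' ∧ τ' ∘ₗ f m = τ ∘ₗ f m := by
  obtain ⟨ρ, hρ⟩ := hAX m _ hτ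
  obtain ⟨r, hr⟩ := (A (m + 1 + 1)).exists_retraction_of_projective_quotient
  refine ⟨τ - ρ ∘ₗ r ∘ₗ f (m + 1), ?_, ?_⟩
  · rw [LinearMap.le_ker_iff_comp_subtype_eq_zero, LinearMap.sub_comp, hρ, LinearMap.comp_assoc,
      LinearMap.comp_assoc, ← subtype_comp_restrictedMap (hA := hA), ← LinearMap.comp_assoc _ _ r,
      hr, LinearMap.id_comp, sub_self]
  · rw [LinearMap.sub_comp, LinearMap.comp_assoc, LinearMap.comp_assoc, hff, LinearMap.comp_zero,
      LinearMap.comp_zero, sub_zero]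

theorem isHomExact_quotientMap {X : Type*} [AddCommGroup X] [Module R X]
    (hfX : IsHomExact f X) (hAX : IsHomExact (restrictedMap f A hA) X)
    (hff : ∀ n, f (n + 1) ∘ₗ f n = 0) [∀ n, Module.Projective R (M n ⧸ A n)] :
    IsHomExact (quotientMap f A hA) X := by
  intro n σ hσ
  obtain ⟨τ, hτ⟩ := hfX n (σ ∘ₗ (A (n + 1)).mkQ) <| by
    rw [LinearMap.comp_assoc, ← quotientMap_comp_mkQ (hA := hA), ← LinearMap.comp_assoc, hσ,
      LinearMap.zero_comp]
  have hτA : (τ ∘ₗ (A (n + 1 + 1)).subtype) ∘ₗ restrictedMap f A hA (n + 1) = 0 := by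
    rw [LinearMap.comp_assoc, subtype_comp_restrictedMap, ← LinearMap.comp_assoc, ← hτ,
      LinearMap.comp_assoc, (LinearMap.exact_subtype_mkQ _).linearMap_comp_eq_zero,
      LinearMap.comp_zero]
  obtain ⟨τ', hτ'A, hτ'⟩ := exists_le_ker_and_comp_eq hAX (hff (n + 1)) τ hτA
  refine ⟨(A (n + 1 + 1)).liftQ τ' hτ'A, Submodule.linearMap_qext _ ?_⟩
  rw [hτ, LinearMap.comp_assoc, quotientMap_comp_mkQ, ← LinearMap.comp_assoc,
    Submodule.liftQ_mkQ, hτ']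

end QuotientComplex

theorem quotient_complex_gorenstein_general {ι : Type w} (X : ι → Type x)
    [∀ i, AddCommGroup (X i)] [∀ i, Module R (X i)]
    {f : ∀ n, M n →ₗ[R] M (n + 1)}
    (hex : ∀ n, LinearMap.range (f n) = LinearMap.ker (f (n + 1)))
    (hfX : ∀ i, IsHomExact f (X i))
    {A : ∀ n, Submodule R (M n)} (hA : ∀ n, A n ≤ (A (n + 1)).comap (f n))
    (hexA : ∀ n, LinearMap.range (restrictedMap f A hA n) =
      LinearMap.ker (restrictedMap f A hA (n + 1)))
    (hAX : ∀ i, IsHomExact (restrictedMap f A hA) (X i))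
    (hquotproj : ∀ n, Module.Projective R (M n ⧸ A n)) :
    (∀ n, LinearMap.range (quotientMap f A hA n) =
        LinearMap.ker (quotientMap f A hA (n + 1))) ∧
    (∀ n, Module.Projective R (M n ⧸ A n)) ∧
    (∀ i, IsHomExact (quotientMap f A hA) (X i)) ∧
    Nonempty ((LinearMap.ker (quotientMap f A hA 0)) ≃ₗ[R]
      (↥(LinearMap.ker (f 0)) ⧸
        Submodule.comap (LinearMap.ker (f 0)).subtype (A 0 ⊓ LinearMap.ker (f 0)))) ∧
    IsRelGorensteinProjective R X
      (↥(LinearMap.ker (f 0)) ⧸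
        Submodule.comap (LinearMap.ker (f 0)).subtype (A 0 ⊓ LinearMap.ker (f 0))) := by
  have hff (n : ℤ) : f (n + 1) ∘ₗ f n = 0 := LinearMap.range_le_ker_iff.mp (hex n).le
  have hexQ (n : ℤ) := range_quotientMap_eq_ker (hex n) (hff (n + 1)) (hexA (n + 1)).ge
  have hQX (i : ι) := isHomExact_quotientMap (hfX i) (hAX i) hff
  let e := (LinearEquiv.ofEq _ _ (ker_quotientMap (hff 0) (hexA 0).ge)).trans
    ((LinearMap.ker (f 0)).quotientInfEquivMapMkQ (A 0)).symm
  exact ⟨hexQ, hquotproj, hQX, ⟨e⟩,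
    fun n => ModuleCat.of R (M n ⧸ A n), quotientMap f A hA, hquotproj, hexQ, hQX, ⟨e.symm⟩⟩

theorem quotient_complex_gorenstein {ι : Type w} (X : ι → Type x)
    [∀ i, AddCommGroup (X i)] [∀ i, Module R (X i)]
    {f : ∀ n, M n →ₗ[R] M (n + 1)}
    (hex : ∀ n, LinearMap.range (f n) = LinearMap.ker (f (n + 1)))
    (hproj : ∀ n, Module.Projective R (M n))
    (hfX : ∀ i, IsHomExact f (X i))
    {A : ∀ n, Submodule R (M n)} (hA : ∀ n, A n ≤ (A (n + 1)).comap (f n))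
    (hexA : ∀ n, LinearMap.range (restrictedMap f A hA n) =
      LinearMap.ker (restrictedMap f A hA (n + 1)))
    (hAX : ∀ i, IsHomExact (restrictedMap f A hA) (X i))
    (hquotproj : ∀ n, Module.Projective R (M n ⧸ A n)) :
    (∀ n, LinearMap.range (quotientMap f A hA n) =
        LinearMap.ker (quotientMap f A hA (n + 1))) ∧
    (∀ n, Module.Projective R (M n ⧸ A n)) ∧
    (∀ i, IsHomExact (quotientMap f A hA) (X i)) ∧
    Nonempty ((LinearMap.ker (quotientMap f A hA 0)) ≃ₗ[R]
      (↥(LinearMap.ker (f 0)) ⧸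
        Submodule.comap (LinearMap.ker (f 0)).subtype (A 0 ⊓ LinearMap.ker (f 0)))) ∧
    IsRelGorensteinProjective R X
      (↥(LinearMap.ker (f 0)) ⧸
        Submodule.comap (LinearMap.ker (f 0)).subtype (A 0 ⊓ LinearMap.ker (f 0))) :=
  quotient_complex_gorenstein_general X hex hfX hA hexA hAX hquotproj
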